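/- arXiv:2312.04773 — 3 statements merged into one kernel-verified Lean document; each statement's English description precedes it below -/
import Mathlib

section
/- Let a, b, c, d be complex numbers with a ≠ c, b ≠ d, and b - a = c - d (so that a - b + c - d = 0). Suppose f: {a,b,c,d} → ℂ satisfies the discrete Cauchy–Riemann equation (f(a)-f(c))/(a-c) = (f(b)-f(d))/(b-d). Then (f(c)(b-c) + f(b)(a-c) + f(a)(a-b))/(2(a-c)) - (f(d)(c-d) + f(c)(b-d) + f(b)(b-c))/(2(b-d)) = 0. (This expresses that the discrete primitive F(z) = ∫ f δz of a discrete analytic function again satisfies the discrete Cauchy–Riemann equation on each face.) -/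
/-!
On the parallelogram `a b c d` (with `d = a + c - b`) the difference quotient of the discrete
primitive along the diagonal `c a` is `(f b + f c) / 2 + (a - b) / 2 * (f a - f c) / (a - c)`, and
along `d b` it is `(f b + f c) / 2 + (a - b) / 2 * (f b - f d) / (b - d)`. Hence the defect of the
discrete Cauchy–Riemann equation for the primitive is `(a - b) / 2` times the defect for `f`.
-/

theorem primitive_cr_defect_eq_half_mul_cr_defect {K : Type*} [Field K] {a b c d : K}
    (fa fb fc fd : K) (hac : a ≠ c) (hbd : b ≠ d) (hpar : b - a = c - d) :
    (fc * (b - c) + fb * (a - c) + fa * (a - b)) / (2 * (a - c)) -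
      (fd * (c - d) + fc * (b - d) + fb * (b - c)) / (2 * (b - d)) =
    (a - b) / 2 * ((fa - fc) / (a - c) - (fb - fd) / (b - d)) := by
  obtain rfl : d = a + c - b := by linear_combination hpar
  have hac' : a - c ≠ 0 := sub_ne_zero.mpr hac
  have hbd' : b - (a + c - b) ≠ 0 := sub_ne_zero.mpr hbd
  field_simp
  ring

theorem primitive_satisfies_CR
    (a b c d : ℂ) (f : ℂ → ℂ)
    (hac : a ≠ c) (hbd : b ≠ d) (hpar : b - a = c - d)
    (hCR : (f a - f c) / (a - c) = (f b - f d) / (b - d)) :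
    (f c * (b - c) + f b * (a - c) + f a * (a - b)) / (2 * (a - c)) -
      (f d * (c - d) + f c * (b - d) + f b * (b - c)) / (2 * (b - d)) = 0 := by
  rw [primitive_cr_defect_eq_half_mul_cr_defect _ _ _ _ hac hbd hpar, hCR, sub_self, mul_zero]
end

section
/- Let t ∈ ℂ and let a, b, c, d ∈ ℂ with a ≠ c, b ≠ d, b - a = c - d, c - b = d - a, and suppose 2 + t(1+a-b), 2 + t(1+a-d), 2 + t(1+b-c) are nonzero. Let e: {a,b,c,d} → ℂ satisfy e(u)(2 + t(1+v-u)) = e(v)(2 + t(1+u-v)) for each edge (u,v) ∈ {(a,b),(b,c),(c,d),(d,a)}. Then e satisfies the discrete Cauchy–Riemann equation (e(b) - e(d))/(b - d) = (e(c) - e(a))/(c - a). -/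
theorem eigenfunction_is_DA
    (t a b c d : ℂ) (e : ℂ → ℂ)
    (hac : a ≠ c) (hbd : b ≠ d)
    (h1 : b - a = c - d) (h2 : c - b = d - a)
    (n1 : 2 + t * (1 + a - b) ≠ 0) (n2 : 2 + t * (1 + a - d) ≠ 0)
    (n3 : 2 + t * (1 + b - c) ≠ 0)
    (hab : e a * (2 + t * (1 + b - a)) = e b * (2 + t * (1 + a - b)))
    (hbc : e b * (2 + t * (1 + c - b)) = e c * (2 + t * (1 + b - c)))
    (hcd : e c * (2 + t * (1 + d - c)) = e d * (2 + t * (1 + c - d)))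
    (hda : e d * (2 + t * (1 + a - d)) = e a * (2 + t * (1 + d - a))) :
    (e b - e d) / (b - d) = (e c - e a) / (c - a) := by
  have hbd' : b - d ≠ 0 := sub_ne_zero.mpr hbd
  have hca' : c - a ≠ 0 := sub_ne_zero.mpr (Ne.symm hac)
  have hd' : d = a + c - b := by linear_combination -h2
  subst hd'
  rw [div_eq_div_iff hbd' hca']
  have hb : e b = e a * (2 + t * (1 + b - a)) / (2 + t * (1 + a - b)) := by
    rw [eq_div_iff n1]; linear_combination -hab
  have hd : e (a + c - b) = e a * (2 + t * (1 + (a + c - b) - a)) / (2 + t * (1 + a - (a + c - b))) := by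
    rw [eq_div_iff n2]; linear_combination hda
  have hc : e c = e b * (2 + t * (1 + c - b)) / (2 + t * (1 + b - c)) := by
    rw [eq_div_iff n3]; linear_combination -hbc
  rw [hc, hb, hd]
  field_simp
  ring
end

section
/- Let N ≥ 1 and let z_0, z_1, ..., z_N ∈ ℂ and f: {z_0,...,z_N} → ℂ satisfy f(z_{k-1})(1 + z_k - z_{k-1}) = f(z_k)(1 + z_{k-1} - z_k) for all k = 1,...,N, with 1 + z_k - z_{k-1} ≠ 0 for k = 1,...,N-1, and z_N - z_{N-1} = 1. Then f(z_0) = 0. -/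
theorem leash_forces_zero
    (N : ℕ) (hN : 1 ≤ N) (z : ℕ → ℂ) (f : ℂ → ℂ)
    (hedge : ∀ k, 1 ≤ k → k ≤ N →
      f (z (k - 1)) * (1 + z k - z (k - 1)) = f (z k) * (1 + z (k - 1) - z k))
    (hne : ∀ k, 1 ≤ k → k ≤ N - 1 → 1 + z k - z (k - 1) ≠ 0)
    (hlast : z N - z (N - 1) = 1) :
    f (z 0) = 0 := by
  have hbase : f (z (N - 1)) = 0 := by
    have h := hedge N hN le_rfl
    have h2 : (1 : ℂ) + z N - z (N - 1) = 2 := by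
      have : z N - z (N - 1) = 1 := hlast
      linear_combination this
    have h0 : (1 : ℂ) + z (N - 1) - z N = 0 := by linear_combination -hlast
    rw [h2, h0, mul_zero] at h
    have : f (z (N - 1)) * 2 = 0 := h
    simpa using this
  have key : ∀ j, j ≤ N - 1 → f (z (N - 1 - j)) = 0 := by
    intro j
    induction j with
    | zero => intro _; simpa using hbase
    | succ j ih =>
      intro hj
      have hjN : j ≤ N - 1 := by omega
      have hz : f (z (N - 1 - j)) = 0 := ih hjN
      set k := N - 1 - j with hk
      have hk1 : 1 ≤ k := by omega
      have hkN : k ≤ N - 1 := by omega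
      have h := hedge k hk1 (by omega)
      rw [hz, zero_mul] at h
      have hne' := hne k hk1 hkN
      have : f (z (k - 1)) = 0 := by
        rcases mul_eq_zero.mp h with h' | h'
        · exact h'
        · exact absurd h' hne'
      have hkk : N - 1 - (j + 1) = k - 1 := by omega
      rw [hkk]
      exact this
  have := key (N - 1) le_rfl
  simpa using this
end
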